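/- Let X* be one half times the 9×9 real symmetric matrix whose upper-triangular entries (rows and columns indexed 1–9) are: row 1: (1, −1, −1, 0, −1, 1, 1, 0, 0); row 2 (from the diagonal): (4, 1, 0, 1, −4, −4, 0, 3); row 3: (1, 0, 1, −1, −1, 0, 0); row 4: (0, 0, 0, 0, 0, 0); row 5: (1, −1, −1, 0, 0); row 6: (4, 4, 0, −3); row 7: (4, 0, −3); row 8: (0, 0); row 9: (3). Then X* is positive semidefinite. -/

import Mathlib

noncomputable def Xstar : Matrix (Fin 9) (Fin 9) ℝ :=
  (1/2 : ℝ) •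
  !![1, -1, -1, 0, -1, 1, 1, 0, 0;
     -1, 4, 1, 0, 1, -4, -4, 0, 3;
     -1, 1, 1, 0, 1, -1, -1, 0, 0;
     0, 0, 0, 0, 0, 0, 0, 0, 0;
     -1, 1, 1, 0, 1, -1, -1, 0, 0;
     1, -4, -1, 0, -1, 4, 4, 0, -3;
     1, -4, -1, 0, -1, 4, 4, 0, -3;
     0, 0, 0, 0, 0, 0, 0, 0, 0;
     0, 3, 0, 0, 0, -3, -3, 0, 3]

/-! `Xstar` is a nonnegative combination of two rank-one matrices `v vᵀ`, hence positive
semidefinite; equivalently, its quadratic form is the sum of squares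
`½ (x₀ - x₁ - x₂ - x₄ + x₅ + x₆)² + ³⁄₂ (x₁ - x₅ - x₆ + x₈)²`. -/

open Matrix

lemma Matrix.posSemidef_smul_vecMulVec_self {n R : Type*} [Fintype n] [CommRing R]
    [PartialOrder R] [StarRing R] [StarOrderedRing R] [TrivialStar R] {c : R} (hc : 0 ≤ c)
    (v : n → R) : (c • vecMulVec v v).PosSemidef := by
  simpa using (posSemidef_vecMulVec_self_star v).smul hc

lemma Xstar_eq_sum_vecMulVec :
    Xstar = (1/2 : ℝ) • vecMulVec ![1, -1, -1, 0, -1, 1, 1, 0, 0] ![1, -1, -1, 0, -1, 1, 1, 0, 0]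
      + (3/2 : ℝ) • vecMulVec ![0, 1, 0, 0, 0, -1, -1, 0, 1] ![0, 1, 0, 0, 0, -1, -1, 0, 1] := by
  ext i j
  fin_cases i <;> fin_cases j <;> norm_num [Xstar, vecMulVec_apply]

theorem stmt4 : Xstar.PosSemidef := by
  rw [Xstar_eq_sum_vecMulVec]
  exact (posSemidef_smul_vecMulVec_self (by norm_num) _).add
    (posSemidef_smul_vecMulVec_self (by norm_num) _)
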